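/- arXiv:1308.3026 — 2 statements merged into one kernel-verified Lean document; each statement's English description precedes it below -/
import Mathlib

section
/- Let A be a diagonalizable derivation of the Heisenberg algebra 𝓗_n with positive eigenvalues α_1 < ⋯ < α_{k+1} and eigenspaces U_1, …, U_{k+1}. Then dim U_i = dim U_{k+1−i} for all 1 ≤ i ≤ k. -/
open scoped BigOperators RealInnerProductSpace ENNReal
open Module Filter

noncomputable section

/-- The underlying space of the `n`-th Heisenberg group/algebra: `ℝ^{2n+1}`
with a fixed inner product. -/
abbrev HV (n : ℕ) : Type := EuclideanSpace ℝ (Fin (2 * n + 1))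

/-- `br` is a Heisenberg Lie bracket on `ℝ^{2n+1}`: with respect to some basis
`b`, the only nontrivial bracket relations are `[b_{2s}, b_{2s+1}] = b_{2n}` (0-indexed). -/
def IsHeisenbergBracket (n : ℕ) (br : HV n →ₗ[ℝ] HV n →ₗ[ℝ] HV n) : Prop :=
  ∃ b : Basis (Fin (2 * n + 1)) ℝ (HV n),
    ∀ i j : Fin (2 * n + 1),
      br (b i) (b j) =
        (if (i : ℕ) % 2 = 0 ∧ (j : ℕ) = (i : ℕ) + 1 ∧ (i : ℕ) < 2 * n then (1 : ℝ)
         else if (j : ℕ) % 2 = 0 ∧ (i : ℕ) = (j : ℕ) + 1 ∧ (j : ℕ) < 2 * n then (-1 : ℝ)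
         else 0) • b ⟨2 * n, by omega⟩

/-- `A` is a derivation of the Lie algebra `(ℝ^{2n+1}, br)`. -/
def IsDerivation {n : ℕ} (br : HV n →ₗ[ℝ] HV n →ₗ[ℝ] HV n)
    (A : HV n →ₗ[ℝ] HV n) : Prop :=
  ∀ x y, A (br x y) = br (A x) y + br x (A y)

/-- The group product `x * y = x + y + (1/2)[x,y]` (BCH formula). -/
def hMul {n : ℕ} (br : HV n →ₗ[ℝ] HV n →ₗ[ℝ] HV n) (x y : HV n) : HV n :=
  x + y + (2⁻¹ : ℝ) • br x y

/-- The left coset `g * S`. -/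
def leftCoset {n : ℕ} (br : HV n →ₗ[ℝ] HV n →ₗ[ℝ] HV n) (g : HV n)
    (S : Set (HV n)) : Set (HV n) :=
  hMul br g '' S

/-- `‖x‖_A = Σ_i |x_i|^{1/α_i}`, where `x_i` is the component of `x` in the
eigenspace `U i` (computed as the orthogonal projection; the eigenspaces are
assumed mutually orthogonal with sum everything). -/
def normA {n k : ℕ} (α : Fin (k + 1) → ℝ) (U : Fin (k + 1) → Submodule ℝ (HV n))
    (x : HV n) : ℝ :=
  ∑ i, ‖((U i).orthogonalProjectionOnto x : HV n)‖ ^ (α i)⁻¹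

/-- The parabolic visual quasimetric `d_A(p,q) = ‖(-p) * q‖_A`. -/
def qd {n k : ℕ} (br : HV n →ₗ[ℝ] HV n →ₗ[ℝ] HV n) (α : Fin (k + 1) → ℝ)
    (U : Fin (k + 1) → Submodule ℝ (HV n)) (p q : HV n) : ℝ :=
  normA α U (hMul br (-p) q)

/-- `η` is a homeomorphism of `[0,∞)` onto itself. -/
def IsHomeoOfNonneg (η : ℝ → ℝ) : Prop :=
  η 0 = 0 ∧ StrictMonoOn η (Set.Ici 0) ∧ ContinuousOn η (Set.Ici 0) ∧
    ∀ s : ℝ, 0 ≤ s → ∃ t : ℝ, 0 ≤ t ∧ η t = s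

/-- `F` is an `η`-quasisymmetry from `(X, d1)` to `(X, d2)`. -/
def IsQS {X : Type*} (d1 d2 : X → X → ℝ) (η : ℝ → ℝ) (F : X → X) : Prop :=
  Function.Bijective F ∧
    ∀ x y z : X, x ≠ y → y ≠ z → x ≠ z →
      d2 (F x) (F y) / d2 (F x) (F z) ≤ η (d1 x y / d1 x z)

/-- `L_F(x,r) = sup { d2(F x, F x') : d1(x,x') ≤ r }`. -/
def LFr {X : Type*} (d1 d2 : X → X → ℝ) (F : X → X) (x : X) (r : ℝ) : ℝ≥0∞ :=
  ⨆ (x' : X) (_ : d1 x x' ≤ r), ENNReal.ofReal (d2 (F x) (F x'))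

/-- `l_F(x,r) = inf { d2(F x, F x') : d1(x,x') ≥ r }`. -/
def lFr {X : Type*} (d1 d2 : X → X → ℝ) (F : X → X) (x : X) (r : ℝ) : ℝ≥0∞ :=
  ⨅ (x' : X) (_ : r ≤ d1 x x'), ENNReal.ofReal (d2 (F x) (F x'))

/-- `L_F(x) = limsup_{r→0⁺} L_F(x,r)/r`. -/
def LF {X : Type*} (d1 d2 : X → X → ℝ) (F : X → X) (x : X) : ℝ≥0∞ :=
  Filter.limsup (fun r : ℝ => LFr d1 d2 F x r / ENNReal.ofReal r) (nhdsWithin 0 (Set.Ioi 0))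

/-- `l_F(x) = liminf_{r→0⁺} l_F(x,r)/r`. -/
def lF {X : Type*} (d1 d2 : X → X → ℝ) (F : X → X) (x : X) : ℝ≥0∞ :=
  Filter.liminf (fun r : ℝ => lFr d1 d2 F x r / ENNReal.ofReal r) (nhdsWithin 0 (Set.Ioi 0))


/-!
Write the bracket as `[x, y] = ω(x, y) z`, where `z` spans the centre and the radical of the
form `ω` is `ℝ z`. A derivation `A` preserves the line `ℝ z`, say `A z = μ z`, and then
`ω(Ax, y) + ω(x, Ay) = μ ω(x, y)`, so `ω` pairs `U_i` with `U_j` only when `α_i + α_j = μ`.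
Since `ω` has no radical outside `ℝ z`, every eigenvalue `α_t ≠ μ` has a partner `α_s` with
`α_t + α_s = μ`. Hence `μ` is the largest eigenvalue, the partner map on the others reverses
their order, so `α_i + α_{k+1-i} = α_{k+1}`, and `ω` embeds each of `U_i`, `U_{k+1-i}` into the
dual of the other.
-/

section Eigenspaces

variable {K V : Type*} [Field K] [AddCommGroup V] [Module K V]
  {ω : V →ₗ[K] V →ₗ[K] K} {A : Module.End K V} {μ : K} {z : V}

theorem exists_eigenvalue_of_derivation_of_bracket_eq_smul {br : V →ₗ[K] V →ₗ[K] V}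
    (hz : z ≠ 0) (hz_mem : ∃ x y, br x y = z) (hbr : ∀ x y, br x y = ω x y • z)
    (hA : ∀ x y, A (br x y) = br (A x) y + br x (A y)) :
    ∃ μ, A z = μ • z ∧ ∀ x y, ω (A x) y + ω x (A y) = μ * ω x y := by
  obtain ⟨x₀, y₀, hz₀⟩ := hz_mem
  have hAz : A z = (ω (A x₀) y₀ + ω x₀ (A y₀)) • z := by
    conv_lhs => rw [← hz₀]
    rw [hA, hbr (A x₀), hbr x₀ (A y₀), add_smul]
  refine ⟨_, hAz, fun x y => smul_left_injective K hz ?_⟩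
  simp only [add_smul, ← hbr, ← hA]
  rw [hbr, map_smul, hAz, smul_smul, mul_comm]

theorem apply_eq_zero_of_mem_eigenspace_of_add_ne
    (hωA : ∀ x y, ω (A x) y + ω x (A y) = μ * ω x y) {a b : K} {x y : V}
    (hx : x ∈ A.eigenspace a) (hy : y ∈ A.eigenspace b) (hab : a + b ≠ μ) : ω x y = 0 := by
  have h := hωA x y
  rw [Module.End.mem_eigenspace_iff.mp hx, Module.End.mem_eigenspace_iff.mp hy] at h
  simp only [map_smul, LinearMap.smul_apply, smul_eq_mul] at h
  have h' : (a + b - μ) * ω x y = 0 := by linear_combination h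
  exact (mul_eq_zero.mp h').resolve_left (sub_ne_zero.mpr hab)

theorem exists_eq_of_mem_eigenspace_of_iSup_eq_top {ι : Type*} {α : ι → K}
    (hspan : ⨆ i, A.eigenspace (α i) = ⊤) (hz : z ≠ 0) (hAz : A z = μ • z) :
    ∃ i, α i = μ := by
  by_contra! h
  have hle : ⨆ i, A.eigenspace (α i) ≤ ⨆ (ν) (_ : ν ≠ μ), A.eigenspace ν :=
    iSup_le fun i => le_iSup₂_of_le (α i) (h i) le_rfl
  rw [hspan] at hle
  exact hz ((A.eigenspaces_iSupIndep μ).le_bot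
    ⟨Module.End.mem_eigenspace_iff.mpr hAz, hle Submodule.mem_top⟩)

theorem LinearMap.eq_zero_of_forall_eigenspace_le_ker {ι : Type*} {α : ι → K}
    (hspan : ⨆ i, A.eigenspace (α i) = ⊤) {f : V →ₗ[K] K}
    (hf : ∀ i, A.eigenspace (α i) ≤ LinearMap.ker f) : f = 0 :=
  LinearMap.ker_eq_top.mp (eq_top_iff.mpr (hspan ▸ iSup_le hf))

theorem eq_zero_of_mem_eigenspace_of_apply_eq_zero
    (hrad : ∀ x, ω x = 0 → x ∈ K ∙ z) (hAz : A z = μ • z) {a : K} {x : V}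
    (hx : x ∈ A.eigenspace a) (ha : a ≠ μ) (hωx : ω x = 0) : x = 0 := by
  have hzμ : K ∙ z ≤ A.eigenspace μ :=
    (Submodule.span_singleton_le_iff_mem _ _).mpr (Module.End.mem_eigenspace_iff.mpr hAz)
  exact (A.eigenspaces_iSupIndep.pairwiseDisjoint ha).le_bot ⟨hx, hzμ (hrad x hωx)⟩

variable {ι : Type*} {α : ι → K}

theorem exists_add_eq_of_eigenspace_ne_bot
    (hωA : ∀ x y, ω (A x) y + ω x (A y) = μ * ω x y) (hrad : ∀ x, ω x = 0 → x ∈ K ∙ z)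
    (hAz : A z = μ • z) (hspan : ⨆ i, A.eigenspace (α i) = ⊤) {t : ι}
    (ht : A.eigenspace (α t) ≠ ⊥) (htμ : α t ≠ μ) : ∃ s, α t + α s = μ := by
  obtain ⟨x, hx, hx0⟩ := Submodule.exists_mem_ne_zero_of_ne_bot ht
  by_contra! h
  refine hx0 (eq_zero_of_mem_eigenspace_of_apply_eq_zero hrad hAz hx htμ ?_)
  exact LinearMap.eq_zero_of_forall_eigenspace_le_ker hspan fun s y hy =>
    apply_eq_zero_of_mem_eigenspace_of_add_ne hωA hx hy (h s)

theorem finrank_eigenspace_le_of_add_eq [FiniteDimensional K V]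
    (hωA : ∀ x y, ω (A x) y + ω x (A y) = μ * ω x y) (hrad : ∀ x, ω x = 0 → x ∈ K ∙ z)
    (hAz : A z = μ • z) (hspan : ⨆ i, A.eigenspace (α i) = ⊤) (hα : Function.Injective α)
    {i j : ι} (hij : α i + α j = μ) (hi : α i ≠ μ) :
    Module.finrank K (A.eigenspace (α i)) ≤ Module.finrank K (A.eigenspace (α j)) := by
  let Φ := ω.domRestrict₁₂ (A.eigenspace (α i)) (A.eigenspace (α j))
  have hΦ : Function.Injective Φ := by
    refine (injective_iff_map_eq_zero Φ).mpr fun x hx => Subtype.ext ?_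
    refine eq_zero_of_mem_eigenspace_of_apply_eq_zero hrad hAz x.2 hi ?_
    refine LinearMap.eq_zero_of_forall_eigenspace_le_ker hspan fun s y hy => ?_
    obtain rfl | hsj := eq_or_ne s j
    · exact LinearMap.congr_fun hx ⟨y, hy⟩
    · refine apply_eq_zero_of_mem_eigenspace_of_add_ne hωA x.2 hy fun h => hsj (hα ?_)
      linear_combination h - hij
  exact (LinearMap.finrank_le_finrank_of_injective hΦ).trans_eq (Subspace.dual_finrank_eq)

end Eigenspaces

theorem Fin.add_eq_last_of_exists_add_eq {M : Type*} [AddCommMonoid M] [LinearOrder M]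
    [IsOrderedCancelAddMonoid M] {k : ℕ} {α : Fin (k + 1) → M} (hα : StrictMono α)
    (hpair : ∀ t : Fin k, ∃ s : Fin k, α t.castSucc + α s.castSucc = α (Fin.last k))
    {i j : Fin (k + 1)} (hij : (i : ℕ) + j + 2 = k + 1) : α i + α j = α (Fin.last k) := by
  choose σ hσ using hpair
  have hσ_anti : StrictAnti σ := fun t u htu => by
    have hαtu : α t.castSucc < α u.castSucc := hα (Fin.castSucc_lt_castSucc_iff.mpr htu)
    by_contra! h
    have := add_lt_add_of_lt_of_le hαtu (hα.monotone (Fin.castSucc_le_castSucc_iff.mpr h))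
    rw [hσ, hσ] at this
    exact this.false
  have hσ_rev (t : Fin k) : σ t = t.rev := by
    simpa using (hσ_anti.comp Fin.rev_strictAnti).apply_eq (x := t.rev)
  have h := hσ ⟨i, by omega⟩
  rw [hσ_rev] at h
  convert h using 3 <;> ext
  · rfl
  · simp; omega

section OrderedEigenvalues

variable {K V : Type*} [Field K] [LinearOrder K] [IsStrictOrderedRing K] [AddCommGroup V]
  [Module K V] [FiniteDimensional K V]
  {ω : V →ₗ[K] V →ₗ[K] K} {A : Module.End K V} {μ : K} {z : V}

theorem finrank_eigenspace_eq_of_add_eq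
    (hωA : ∀ x y, ω (A x) y + ω x (A y) = μ * ω x y) (hrad : ∀ x, ω x = 0 → x ∈ K ∙ z)
    (hz : z ≠ 0) (hAz : A z = μ • z) {k : ℕ} {α : Fin (k + 1) → K} (hα : StrictMono α)
    (hα_pos : ∀ i, 0 < α i) (hne : ∀ i, A.eigenspace (α i) ≠ ⊥)
    (hspan : ⨆ i, A.eigenspace (α i) = ⊤) {i j : Fin (k + 1)} (hij : (i : ℕ) + j + 2 = k + 1) :
    Module.finrank K (A.eigenspace (α i)) = Module.finrank K (A.eigenspace (α j)) := by
  have hμ : α (Fin.last k) = μ := by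
    obtain ⟨m, rfl⟩ := exists_eq_of_mem_eigenspace_of_iSup_eq_top hspan hz hAz
    by_contra h
    obtain ⟨s, hs⟩ := exists_add_eq_of_eigenspace_ne_bot hωA hrad hAz hspan (hne _) h
    linarith [hα.monotone (Fin.le_last m), hα_pos s]
  subst hμ
  have hpair (t : Fin k) : ∃ s : Fin k, α t.castSucc + α s.castSucc = α (Fin.last k) := by
    obtain ⟨s, hs⟩ := exists_add_eq_of_eigenspace_ne_bot hωA hrad hAz hspan (hne _)
      (hα.injective.ne (Fin.castSucc_ne_last t))
    obtain ⟨s, rfl⟩ := Fin.exists_castSucc_eq.mpr (show s ≠ Fin.last k by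
      rintro rfl; linarith [hα_pos t.castSucc])
    exact ⟨s, hs⟩
  have hne_last {l : Fin (k + 1)} (hl : (l : ℕ) < k) : α l ≠ α (Fin.last k) :=
    hα.injective.ne (by rintro rfl; simp at hl)
  exact le_antisymm
    (finrank_eigenspace_le_of_add_eq hωA hrad hAz hspan hα.injective
      (Fin.add_eq_last_of_exists_add_eq hα hpair hij) (hne_last (by omega)))
    (finrank_eigenspace_le_of_add_eq hωA hrad hAz hspan hα.injective
      (Fin.add_eq_last_of_exists_add_eq hα hpair (by omega)) (hne_last (by omega)))

end OrderedEigenvalues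

def heisenbergCoeff (n : ℕ) (i j : Fin (2 * n + 1)) : ℝ :=
  if (i : ℕ) % 2 = 0 ∧ (j : ℕ) = (i : ℕ) + 1 ∧ (i : ℕ) < 2 * n then 1
  else if (j : ℕ) % 2 = 0 ∧ (i : ℕ) = (j : ℕ) + 1 ∧ (j : ℕ) < 2 * n then -1
  else 0

theorem exists_heisenbergCoeff_eq_ite {n : ℕ} {t : Fin (2 * n + 1)} (ht : (t : ℕ) < 2 * n) :
    ∃ j ε, ε ≠ 0 ∧ ∀ i, heisenbergCoeff n i j = if i = t then ε else 0 := by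
  rcases Nat.even_or_odd' t with ⟨m, hm | hm⟩
  · refine ⟨⟨t + 1, by omega⟩, 1, one_ne_zero, fun i => ?_⟩
    unfold heisenbergCoeff
    split_ifs <;> simp only [Fin.ext_iff] at * <;> omega
  · refine ⟨⟨t - 1, by omega⟩, -1, by norm_num, fun i => ?_⟩
    unfold heisenbergCoeff
    split_ifs <;> simp only [Fin.ext_iff] at * <;> omega

theorem IsHeisenbergBracket.exists_eq_smul {n : ℕ} {br : HV n →ₗ[ℝ] HV n →ₗ[ℝ] HV n}
    (hbr : IsHeisenbergBracket n br) (hn : 1 ≤ n) :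
    ∃ (z : HV n) (ω : HV n →ₗ[ℝ] HV n →ₗ[ℝ] ℝ), z ≠ 0 ∧ (∃ x y, br x y = z) ∧
      (∀ x y, br x y = ω x y • z) ∧ ∀ x, ω x = 0 → x ∈ ℝ ∙ z := by
  obtain ⟨b, hb⟩ := hbr
  set last := Fin.last (2 * n)
  change ∀ i j, br (b i) (b j) = heisenbergCoeff n i j • b last at hb
  set ω := br.compr₂ (b.coord last)
  have hω (i j) : ω (b i) (b j) = heisenbergCoeff n i j := by simp [ω, hb]
  have hbr_eq : br = ω.compr₂ (LinearMap.toSpanSingleton ℝ _ (b last)) :=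
    b.ext fun i => b.ext fun j => by simp [hb, hω]
  refine ⟨b last, ω, b.ne_zero _, ⟨b ⟨0, by omega⟩, b ⟨1, by omega⟩, ?_⟩,
    fun x y => by rw [hbr_eq]; rfl, fun x hx => ?_⟩
  · rw [hb, heisenbergCoeff, if_pos ⟨rfl, rfl, show 0 < 2 * n by omega⟩, one_smul]
  have hcoord (t : Fin (2 * n + 1)) (ht : t ≠ last) : b.repr x t = 0 := by
    obtain ⟨j, ε, hε, hcol⟩ := exists_heisenbergCoeff_eq_ite (Fin.val_lt_last ht)
    have hflip : ω.flip (b j) = ε • b.coord t :=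
      b.ext fun i => by simp [hω, hcol, Finsupp.single_apply, eq_comm]
    have h0 : ω.flip (b j) x = 0 := by rw [LinearMap.flip_apply, hx, LinearMap.zero_apply]
    simpa [hflip, hε] using h0
  refine Submodule.mem_span_singleton.mpr ⟨b.repr x last, ?_⟩
  conv_rhs => rw [← b.sum_repr x]
  rw [Finset.sum_eq_single last (fun t _ ht => by rw [hcoord t ht, zero_smul]) (by simp)]

theorem stmt3_general
    (n k : ℕ) (hn : 1 ≤ n)
    (br : HV n →ₗ[ℝ] HV n →ₗ[ℝ] HV n) (hbr : IsHeisenbergBracket n br)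
    (A : HV n →ₗ[ℝ] HV n) (hA : IsDerivation br A)
    (α : Fin (k + 1) → ℝ) (hαmono : StrictMono α) (hαpos : ∀ i, 0 < α i)
    (U : Fin (k + 1) → Submodule ℝ (HV n))
    (hU : ∀ i, U i = Module.End.eigenspace A (α i))
    (hUne : ∀ i, U i ≠ ⊥) (hUspan : (⨆ i, U i) = ⊤) :
    ∀ i j : Fin (k + 1), (i : ℕ) + (j : ℕ) + 2 = k + 1 →
      Module.finrank ℝ (U i) = Module.finrank ℝ (U j) := by
  intro i j hij
  obtain ⟨z, ω, hz, hz_mem, hbr_eq, hrad⟩ := hbr.exists_eq_smul hn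
  obtain ⟨μ, hAz, hωA⟩ := exists_eigenvalue_of_derivation_of_bracket_eq_smul hz hz_mem hbr_eq hA
  obtain rfl : U = fun i => Module.End.eigenspace A (α i) := funext hU
  exact finrank_eigenspace_eq_of_add_eq hωA hrad hz hAz hαmono hαpos hUne hUspan hij

theorem stmt3
    (n k : ℕ) (hn : 1 ≤ n) (hk : 1 ≤ k)
    (br : HV n →ₗ[ℝ] HV n →ₗ[ℝ] HV n) (hbr : IsHeisenbergBracket n br)
    (A : HV n →ₗ[ℝ] HV n) (hA : IsDerivation br A)
    (α : Fin (k + 1) → ℝ) (hαmono : StrictMono α) (hαpos : ∀ i, 0 < α i)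
    (U : Fin (k + 1) → Submodule ℝ (HV n))
    (hU : ∀ i, U i = Module.End.eigenspace A (α i))
    (hUne : ∀ i, U i ≠ ⊥) (hUspan : (⨆ i, U i) = ⊤) :
    ∀ i j : Fin (k + 1), (i : ℕ) + (j : ℕ) + 2 = k + 1 →
      Module.finrank ℝ (U i) = Module.finrank ℝ (U j) :=
  stmt3_general n k hn br hbr A hA α hαmono hαpos U hU hUne hUspan
end
end

section
/- Let A be a diagonalizable derivation of the Heisenberg algebra 𝓗_n with positive eigenvalues α_1 < ⋯ < α_{k+1} and eigenspaces U_1, …, U_{k+1}, and fix a nonzero vector e ∈ U_{k+1}. If 1 ≤ i ≤ k satisfies 2i = k+1, then m_i = dim U_i is even, say m_i = 2k_i, and there is a basis e_1, η_1, …, e_{k_i}, η_{k_i} of U_i such that [e_s, η_t] = δ_{st}·e and [e_s, e_t] = [η_s, η_t] = 0 for all 1 ≤ s, t ≤ k_i. -/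
/-!
A derivation `A` preserves the centre `ℝ z = [𝓗, 𝓗]`, so `z` is an eigenvector, and a nonzero
bracket of eigenvectors for `α_s`, `α_t` is an eigenvector for `α_s + α_t`. Positivity of the
eigenvalues then forces `z` into the top eigenspace, which is `ℝ z`, and pairs every lower
eigenspace `U_s` with some `U_t` with `α_s + α_t = α_{k+1}`. This pairing is an order-reversing
bijection of `{1, …, k}`, so it fixes the middle index `i`: the bracket, read as the scalar
`ω` in `[x, y] = ω x y • e`, is a nondegenerate alternating form on `U_i`. Splitting off
hyperbolic planes one at a time gives the symplectic basis.
-/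

open scoped BigOperators RealInnerProductSpace ENNReal
open Module Filter

noncomputable section

theorem StrictMono.add_self_eq_of_forall_exists_add_eq {β : Type*} [AddCommGroup β]
    [LinearOrder β] [IsOrderedAddMonoid β] {m : ℕ} {f : Fin m → β} (hf : StrictMono f) {c : β}
    (h : ∀ j, ∃ t, f j + f t = c) (j : Fin m) (hj : 2 * (j : ℕ) + 1 = m) : f j + f j = c := by
  choose p hp using h
  have hp_anti : StrictAnti p := fun a b hab =>
    hf.lt_iff_lt.1 <| lt_of_add_lt_add_left (a := f a) <| by
      rw [hp a, ← hp b]; exact add_lt_add_left (hf hab) _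
  have hp_rev : p ∘ Fin.rev = id := by
    refine (hp_anti.comp Fin.rev_strictAnti).range_inj strictMono_id |>.1 ?_
    rw [Set.range_id, Set.range_comp, Fin.rev_surjective.range_eq, Set.image_univ,
      (Finite.injective_iff_surjective.1 hp_anti.injective).range_eq]
  have hj_rev : Fin.rev j = j := Fin.ext (by rw [Fin.val_rev]; omega)
  have hpj : p j = j := by simpa [hj_rev] using congrFun hp_rev j
  simpa only [hpj] using hp j

section Symplectic

variable {R K V ι : Type*} [CommRing R] [Field K] [AddCommGroup V] [Module R V] [Module K V]

def IsSymplecticFamily [DecidableEq ι] (B : V →ₗ[R] V →ₗ[R] R) (v w : ι → V) : Prop :=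
  (∀ s t, B (v s) (w t) = if s = t then 1 else 0) ∧
    (∀ s t, B (v s) (v t) = 0) ∧ (∀ s t, B (w s) (w t) = 0)

theorem IsSymplecticFamily.linearIndependent [Fintype ι] [DecidableEq ι]
    {B : V →ₗ[R] V →ₗ[R] R} {v w : ι → V} (h : IsSymplecticFamily B v w) :
    LinearIndependent R (Sum.elim v w) := by
  obtain ⟨hvw, hvv, hww⟩ := h
  rw [Fintype.linearIndependent_iff]
  intro g hg
  rintro (t | t)
  · simpa [Fintype.sum_sum_type, hvw, hww, smul_eq_mul] using congrArg (B · (w t)) hg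
  · simpa [Fintype.sum_sum_type, hvw, hvv, smul_eq_mul] using congrArg (B (v t)) hg

theorem IsSymplecticFamily.cons {B : V →ₗ[R] V →ₗ[R] R}
    (hB : B.IsAlt) {m : ℕ} {v w : Fin m → V} (h : IsSymplecticFamily B v w) {x y : V}
    (hxy : B x y = 1) (hx : ∀ s, B x (v s) = 0 ∧ B x (w s) = 0)
    (hy : ∀ s, B y (v s) = 0 ∧ B y (w s) = 0) :
    IsSymplecticFamily B (Fin.cons x v) (Fin.cons y w) := by
  obtain ⟨hvw, hvv, hww⟩ := h
  have hswap : ∀ a b, B a b = 0 → B b a = 0 := fun a b hab => by rw [← hB.neg, hab, neg_zero]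
  refine ⟨fun s t => ?_, fun s t => ?_, fun s t => ?_⟩ <;>
    cases s using Fin.cases <;> cases t using Fin.cases <;>
    simp [hxy, hvw, hvv, hww, hB.self_eq_zero, hx, hy, hswap _ _ (hx _).1,
      hswap _ _ (hy _).1, hswap _ _ (hy _).2, Fin.succ_ne_zero, (Fin.succ_ne_zero _).symm]

theorem exists_isSymplecticFamily_span_eq [FiniteDimensional K V] {B : V →ₗ[K] V →ₗ[K] K}
    (hB : B.IsAlt) (W : Submodule K V) (hW : ∀ x ∈ W, (∀ y ∈ W, B x y = 0) → x = 0) :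
    ∃ (m : ℕ) (v w : Fin m → V), (∀ s, v s ∈ W) ∧ (∀ s, w s ∈ W) ∧
      Submodule.span K (Set.range (Sum.elim v w)) = W ∧ IsSymplecticFamily B v w := by
  induction W using WellFoundedLT.induction with
  | _ W ih =>
  rcases eq_or_ne W ⊥ with rfl | hW0
  · exact ⟨0, Fin.elim0, Fin.elim0, nofun, nofun, by simp [Set.range_eq_empty],
      ⟨nofun, nofun, nofun⟩⟩
  obtain ⟨x, hxW, hx0⟩ := W.ne_bot_iff.1 hW0
  obtain ⟨y₀, hy₀W, hxy₀⟩ : ∃ y ∈ W, B x y ≠ 0 := by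
    by_contra! h
    exact hx0 (hW x hxW h)
  set y := (B x y₀)⁻¹ • y₀
  have hyW : y ∈ W := W.smul_mem _ hy₀W
  have hxy : B x y = 1 := by simp [y, inv_mul_cancel₀ hxy₀]
  set W' := W ⊓ (LinearMap.ker (B x) ⊓ LinearMap.ker (B y))
  have hW'W : W' ≤ W := inf_le_left
  -- `u ↦ u + B y u • x - B x u • y` projects `W` onto `W'` along `span {x, y}`
  have proj_mem : ∀ u ∈ W, u + B y u • x - B x u • y ∈ W' := fun u hu =>
    ⟨W.sub_mem (W.add_mem hu (W.smul_mem _ hxW)) (W.smul_mem _ hyW), by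
      simp [hxy, hB.self_eq_zero], by
      simp [hxy, hB.self_eq_zero, ← hB.neg x y]⟩
  have hW'lt : W' < W := SetLike.lt_iff_le_and_exists.2
    ⟨hW'W, x, hxW, fun h => by simpa [← hB.neg x y, hxy] using h.2.2⟩
  have hW' : ∀ u ∈ W', (∀ u' ∈ W', B u u' = 0) → u = 0 := by
    intro u hu h
    refine hW u (hW'W hu) fun u' hu' => ?_
    have hux : B u x = 0 := by rw [← hB.neg, hu.2.1, neg_zero]
    have huy : B u y = 0 := by rw [← hB.neg, hu.2.2, neg_zero]
    simpa [hux, huy] using h _ (proj_mem u' hu')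
  obtain ⟨m, v, w, hvW', hwW', hspan, hfam⟩ := ih W' hW'lt hW'
  refine ⟨m + 1, Fin.cons x v, Fin.cons y w, Fin.cases hxW fun s => hW'W (hvW' s),
    Fin.cases hyW fun s => hW'W (hwW' s), le_antisymm ?_ fun u hu => ?_,
    hfam.cons hB hxy (fun s => ⟨(hvW' s).2.1, (hwW' s).2.1⟩)
      (fun s => ⟨(hvW' s).2.2, (hwW' s).2.2⟩)⟩
  · rw [Submodule.span_le]
    rintro _ ⟨(s | s), rfl⟩ <;> cases s using Fin.cases
    exacts [hxW, hW'W (hvW' _), hyW, hW'W (hwW' _)]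
  · have hsub : W' ≤ Submodule.span K (Set.range (Sum.elim (Fin.cons x v : Fin (m + 1) → V)
        (Fin.cons y w))) := by
      rw [← hspan]
      refine Submodule.span_mono ?_
      rintro _ ⟨(s | s), rfl⟩
      exacts [⟨Sum.inl s.succ, rfl⟩, ⟨Sum.inr s.succ, rfl⟩]
    rw [show u = (u + B y u • x - B x u • y) - B y u • x + B x u • y by abel]
    refine add_mem (sub_mem (hsub (proj_mem u hu)) (Submodule.smul_mem _ _ ?_))
      (Submodule.smul_mem _ _ ?_)
    exacts [Submodule.subset_span ⟨Sum.inl 0, rfl⟩, Submodule.subset_span ⟨Sum.inr 0, rfl⟩]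

end Symplectic

section Derivation

open Module.End

variable {K V ι : Type*} [Field K] [AddCommGroup V] [Module K V]
  {br : V →ₗ[K] V →ₗ[K] V} {A : Module.End K V} {z : V}

theorem mem_eigenspace_add_of_leibniz (hA : ∀ x y, A (br x y) = br (A x) y + br x (A y))
    {a c : K} {x y : V} (hx : x ∈ A.eigenspace a) (hy : y ∈ A.eigenspace c) :
    br x y ∈ A.eigenspace (a + c) := by
  rw [mem_eigenspace_iff] at hx hy ⊢
  rw [hA, hx, hy, map_smul, LinearMap.smul_apply, map_smul, add_smul]

theorem exists_eq_of_iSup_eigenspace_eq_top {α : ι → K}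
    (hspan : ⨆ i, A.eigenspace (α i) = ⊤) {μ : K} (hμ : A.HasEigenvalue μ) : ∃ i, α i = μ := by
  by_contra! h
  have hdisj := (eigenspaces_iSupIndep A).disjoint_biSup (y := Set.range α) (by simpa using h)
  rw [iSup_range, hspan, disjoint_top] at hdisj
  exact hμ hdisj

theorem exists_mem_eigenspace_of_map_mem_span_singleton {α : ι → K}
    (hspan : ⨆ i, A.eigenspace (α i) = ⊤) (hz : z ≠ 0) (hAz : A z ∈ K ∙ z) :
    ∃ i, z ∈ A.eigenspace (α i) := by
  obtain ⟨μ, hμ⟩ := Submodule.mem_span_singleton.1 hAz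
  have hzμ : z ∈ A.eigenspace μ := mem_eigenspace_iff.2 hμ.symm
  obtain ⟨i, rfl⟩ :=
    exists_eq_of_iSup_eigenspace_eq_top hspan (hasEigenvalue_of_hasEigenvector ⟨hzμ, hz⟩)
  exact ⟨i, hzμ⟩

theorem LinearMap.exists_mem_apply_ne_zero_of_iSup_eq_top {W : Type*} [AddCommGroup W]
    [Module K W] {U : ι → Submodule K V} (hU : ⨆ i, U i = ⊤) {f : V →ₗ[K] W} (hf : f ≠ 0) :
    ∃ i, ∃ y ∈ U i, f y ≠ 0 := by
  by_contra! h
  have : ⨆ i, U i ≤ LinearMap.ker f := iSup_le fun i y hy => h i y hy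
  rw [hU, top_le_iff, LinearMap.ker_eq_top] at this
  exact hf this

theorem add_eq_of_bracket_ne_zero (hA : ∀ x y, A (br x y) = br (A x) y + br x (A y))
    (hcent : ∀ x y, br x y ∈ K ∙ z) {μ a c : K} (hz : z ∈ A.eigenspace μ) {x y : V}
    (hx : x ∈ A.eigenspace a) (hy : y ∈ A.eigenspace c) (hxy : br x y ≠ 0) : a + c = μ := by
  by_contra h
  refine hxy ((Submodule.disjoint_def.1 (disjoint_genEigenspace A h 1 1)) _
    (mem_eigenspace_add_of_leibniz hA hx hy) ?_)
  exact (Submodule.span_singleton_le_iff_mem _ _).2 hz (hcent x y)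

theorem exists_add_eq_of_notMem_span_singleton
    (hA : ∀ x y, A (br x y) = br (A x) y + br x (A y)) (hcent : ∀ x y, br x y ∈ K ∙ z)
    (hrad : ∀ x, br x = 0 → x ∈ K ∙ z) {α : ι → K} (hspan : ⨆ i, A.eigenspace (α i) = ⊤)
    {μ : K} (hz : z ∈ A.eigenspace μ) {s : ι} {x : V} (hx : x ∈ A.eigenspace (α s))
    (hxz : x ∉ K ∙ z) :
    ∃ t, ∃ y ∈ A.eigenspace (α t), br x y ≠ 0 ∧ α s + α t = μ := by
  obtain ⟨t, y, hy, hxy⟩ :=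
    LinearMap.exists_mem_apply_ne_zero_of_iSup_eq_top hspan fun h => hxz (hrad x h)
  exact ⟨t, y, hy, hxy, add_eq_of_bracket_ne_zero hA hcent hz hx hy hxy⟩

end Derivation

section PositiveGrading

open Module.End

variable {V : Type*} [AddCommGroup V] [Module ℝ V] {br : V →ₗ[ℝ] V →ₗ[ℝ] V}
  {A : Module.End ℝ V} {z : V} {k : ℕ} {α : Fin (k + 1) → ℝ}
  (hA : ∀ x y, A (br x y) = br (A x) y + br x (A y)) (hcent : ∀ x y, br x y ∈ ℝ ∙ z)
  (hrad : ∀ x, br x = 0 → x ∈ ℝ ∙ z) (hα : StrictMono α) (hαpos : ∀ i, 0 < α i)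
  (hspan : ⨆ i, A.eigenspace (α i) = ⊤)

include hA hcent hrad hα hαpos hspan in
theorem mem_eigenspace_last_of_map_mem_span_singleton
    (hlast : A.eigenspace (α (Fin.last k)) ≠ ⊥) (hz : z ≠ 0) (hAz : A z ∈ ℝ ∙ z) :
    z ∈ A.eigenspace (α (Fin.last k)) := by
  obtain ⟨j, hzj⟩ := exists_mem_eigenspace_of_map_mem_span_singleton hspan hz hAz
  obtain ⟨x, hx, hx0⟩ := Submodule.exists_mem_ne_zero_of_ne_bot hlast
  by_cases hxz : x ∈ ℝ ∙ z
  · obtain ⟨c, rfl⟩ := Submodule.mem_span_singleton.1 hxz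
    have hc : c ≠ 0 := by rintro rfl; simp at hx0
    simpa [smul_smul, inv_mul_cancel₀ hc] using Submodule.smul_mem _ c⁻¹ hx
  · obtain ⟨t, -, -, -, ht⟩ :=
      exists_add_eq_of_notMem_span_singleton hA hcent hrad hspan hzj hx hxz
    linarith [hα.monotone (Fin.le_last j), hαpos t]

variable (hzlast : z ∈ A.eigenspace (α (Fin.last k)))

include hA hcent hrad hαpos hspan hzlast in
theorem eigenspace_last_le_span_singleton : A.eigenspace (α (Fin.last k)) ≤ ℝ ∙ z := by
  intro x hx
  by_contra hxz
  obtain ⟨t, -, -, -, ht⟩ :=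
    exists_add_eq_of_notMem_span_singleton hA hcent hrad hspan hzlast hx hxz
  linarith [hαpos t]

include hA hcent hrad hα hspan hzlast in
theorem exists_bracket_ne_zero_add_eq_last {s : Fin (k + 1)} (hs : s ≠ Fin.last k) {x : V}
    (hx : x ∈ A.eigenspace (α s)) (hx0 : x ≠ 0) :
    ∃ t, ∃ y ∈ A.eigenspace (α t), br x y ≠ 0 ∧ α s + α t = α (Fin.last k) := by
  refine exists_add_eq_of_notMem_span_singleton hA hcent hrad hspan hzlast hx fun hxz => hx0 ?_
  have hx' : x ∈ A.eigenspace (α (Fin.last k)) :=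
    (Submodule.span_singleton_le_iff_mem _ _).2 hzlast hxz
  exact Submodule.disjoint_def.1 (disjoint_genEigenspace A (hα.injective.ne hs) 1 1) x hx hx'

include hA hcent hrad hα hαpos hspan hzlast in
theorem middle_add_self_eq_last (hne : ∀ i, A.eigenspace (α i) ≠ ⊥) (i : Fin (k + 1))
    (hi : 2 * ((i : ℕ) + 1) = k + 1) : α i + α i = α (Fin.last k) := by
  have hpartner : ∀ j : Fin k, ∃ t : Fin k, α j.castSucc + α t.castSucc = α (Fin.last k) := by
    intro j
    obtain ⟨x, hx, hx0⟩ := Submodule.exists_mem_ne_zero_of_ne_bot (hne j.castSucc)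
    obtain ⟨t, -, -, -, ht⟩ := exists_bracket_ne_zero_add_eq_last hA hcent hrad hα hspan hzlast
      (Fin.castSucc_ne_last j) hx hx0
    have ht_last : t ≠ Fin.last k := by
      rintro rfl
      linarith [hαpos j.castSucc]
    obtain ⟨t, rfl⟩ := Fin.exists_castSucc_eq.2 ht_last
    exact ⟨t, ht⟩
  exact (hα.comp Fin.strictMono_castSucc).add_self_eq_of_forall_exists_add_eq hpartner
    (i.castLT (by omega)) (by rw [Fin.val_castLT]; omega)

include hA hcent hrad hα hαpos hspan hzlast in
theorem eq_zero_of_forall_bracket_middle_eigenspace_eq_zero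
    (hne : ∀ i, A.eigenspace (α i) ≠ ⊥) (i : Fin (k + 1)) (hi : 2 * ((i : ℕ) + 1) = k + 1)
    (x : V) (hx : x ∈ A.eigenspace (α i))
    (hxi : ∀ y ∈ A.eigenspace (α i), br x y = 0) : x = 0 := by
  by_contra hx0
  have hi_last : i ≠ Fin.last k := fun h => by rw [h, Fin.val_last] at hi; omega
  obtain ⟨t, y, hy, hxy, ht⟩ :=
    exists_bracket_ne_zero_add_eq_last hA hcent hrad hα hspan hzlast hi_last hx hx0
  have hii := middle_add_self_eq_last hA hcent hrad hα hαpos hspan hzlast hne i hi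
  have hti : t = i := hα.injective (by linarith)
  exact hxy (hxi y (hti ▸ hy))

end PositiveGrading

def heisCoeff (n : ℕ) (i j : Fin (2 * n + 1)) : ℝ :=
  if (i : ℕ) % 2 = 0 ∧ (j : ℕ) = (i : ℕ) + 1 ∧ (i : ℕ) < 2 * n then 1
  else if (j : ℕ) % 2 = 0 ∧ (i : ℕ) = (j : ℕ) + 1 ∧ (j : ℕ) < 2 * n then -1
  else 0

theorem heisCoeff_swap (n : ℕ) (i j : Fin (2 * n + 1)) :
    heisCoeff n j i = -heisCoeff n i j := by
  unfold heisCoeff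
  split_ifs <;> first | omega | norm_num

theorem exists_heisCoeff_ne_zero_iff {n : ℕ} (m : Fin (2 * n + 1))
    (hm : m ≠ Fin.last (2 * n)) : ∃ j, ∀ i, heisCoeff n i j ≠ 0 ↔ i = m := by
  have hm' : (m : ℕ) < 2 * n := Fin.val_lt_last hm
  refine ⟨⟨if (m : ℕ) % 2 = 0 then m + 1 else m - 1, by split_ifs <;> omega⟩, fun i => ?_⟩
  simp only [heisCoeff, Fin.ext_iff]
  split_ifs <;> simp only [ne_eq, one_ne_zero, neg_eq_zero, not_true_eq_false,
    not_false_eq_true, true_iff, false_iff] <;> omega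

section Heisenberg

variable {n : ℕ} {br : HV n →ₗ[ℝ] HV n →ₗ[ℝ] HV n} {b : Basis (Fin (2 * n + 1)) ℝ (HV n)}
  (hb : ∀ i j, br (b i) (b j) = heisCoeff n i j • b (Fin.last (2 * n)))

include hb

theorem heis_isAlt : br.IsAlt := by
  have hflip : br.flip = -br := LinearMap.ext_basis b b fun i j => by
    simp [hb, heisCoeff_swap n i j]
  intro x
  have h : br x x = -br x x := by simpa using LinearMap.congr_fun₂ hflip x x
  have h2 : (2 : ℝ) • br x x = 0 := by rw [two_smul]; exact eq_neg_iff_add_eq_zero.1 h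
  exact (smul_eq_zero.1 h2).resolve_left two_ne_zero

theorem heis_bracket_mem_span (x y : HV n) : br x y ∈ ℝ ∙ b (Fin.last (2 * n)) := by
  set Z := ℝ ∙ b (Fin.last (2 * n))
  have h : br.compr₂ Z.mkQ = 0 := LinearMap.ext_basis b b fun i j => by
    simp [hb, Submodule.Quotient.mk_eq_zero, Z, Submodule.mem_span_singleton_self]
  simpa [Submodule.Quotient.mk_eq_zero] using LinearMap.congr_fun₂ h x y

theorem heis_mem_span_of_bracket_eq_zero (x : HV n) (hx : br x = 0) :
    x ∈ ℝ ∙ b (Fin.last (2 * n)) := by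
  have hrepr : ∀ m, m ≠ Fin.last (2 * n) → b.repr x m = 0 := by
    intro m hm
    obtain ⟨j, hj⟩ := exists_heisCoeff_ne_zero_iff m hm
    have hxj : br x (b j) = (b.repr x m * heisCoeff n m j) • b (Fin.last (2 * n)) := by
      conv_lhs => rw [← b.sum_repr x]
      rw [map_sum, LinearMap.sum_apply, Finset.sum_eq_single m]
      · rw [map_smul, LinearMap.smul_apply, hb, smul_smul]
      · intro i _ hi
        rw [map_smul, LinearMap.smul_apply, hb, not_not.1 (mt (hj i).1 hi), zero_smul, smul_zero]
      · simp
    rw [hx, LinearMap.zero_apply, eq_comm, smul_eq_zero] at hxj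
    simpa [b.ne_zero, (hj m).2 rfl] using hxj
  rw [← Set.image_singleton, b.mem_span_image]
  intro m hm
  by_contra h
  exact (Finsupp.mem_support_iff.1 hm) (hrepr m h)

theorem heis_bracket_zero_one (hn : 1 ≤ n) :
    br (b ⟨0, by omega⟩) (b ⟨1, by omega⟩) = b (Fin.last (2 * n)) := by
  rw [hb, heisCoeff, if_pos ⟨rfl, rfl, show 0 < 2 * n by omega⟩, one_smul]

end Heisenberg

theorem exists_eq_smul_of_mem_span_singleton {K V : Type*} [Field K] [AddCommGroup V]
    [Module K V] {br : V →ₗ[K] V →ₗ[K] V} {z e : V} (hbr : ∀ x y, br x y ∈ K ∙ z)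
    (he : e ∈ K ∙ z) (he0 : e ≠ 0) : ∃ ω : V →ₗ[K] V →ₗ[K] K, ∀ x y, br x y = ω x y • e := by
  obtain ⟨c, rfl⟩ := Submodule.mem_span_singleton.1 he
  have hc : IsUnit c := isUnit_iff_ne_zero.2 (left_ne_zero_of_smul he0)
  obtain ⟨φ, hφ⟩ := Module.Projective.exists_dual_eq_one K he0
  refine ⟨br.compr₂ φ, fun x y => ?_⟩
  obtain ⟨d, hd⟩ :=
    Submodule.mem_span_singleton.1 (Submodule.span_singleton_smul_eq hc z ▸ hbr x y)
  simp [← hd, hφ]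

theorem stmt5_general
    (n k : ℕ) (hn : 1 ≤ n)
    (br : HV n →ₗ[ℝ] HV n →ₗ[ℝ] HV n) (hbr : IsHeisenbergBracket n br)
    (A : HV n →ₗ[ℝ] HV n) (hA : IsDerivation br A)
    (α : Fin (k + 1) → ℝ) (hαmono : StrictMono α) (hαpos : ∀ i, 0 < α i)
    (U : Fin (k + 1) → Submodule ℝ (HV n))
    (hU : ∀ i, U i = Module.End.eigenspace A (α i))
    (hUne : ∀ i, U i ≠ ⊥) (hUspan : (⨆ i, U i) = ⊤)
    (e : HV n) (he : e ∈ U (Fin.last k)) (hene : e ≠ 0) :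
    ∀ i : Fin (k + 1), 2 * ((i : ℕ) + 1) = k + 1 →
      ∃ ki : ℕ, Module.finrank ℝ (U i) = 2 * ki ∧
        ∃ v w : Fin ki → HV n,
          (∀ s, v s ∈ U i) ∧ (∀ s, w s ∈ U i) ∧
          LinearIndependent ℝ (Sum.elim v w) ∧
          Submodule.span ℝ (Set.range (Sum.elim v w)) = U i ∧
          (∀ s t, br (v s) (w t) = (if s = t then (1 : ℝ) else 0) • e) ∧
          (∀ s t, br (v s) (v t) = 0) ∧ (∀ s t, br (w s) (w t) = 0) := by
  intro i hi
  simp only [hU] at hUne hUspan he ⊢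
  obtain ⟨b, hb⟩ := hbr
  replace hb : ∀ i j, br (b i) (b j) = heisCoeff n i j • b (Fin.last (2 * n)) := hb
  have hcent := heis_bracket_mem_span hb
  have hrad := heis_mem_span_of_bracket_eq_zero hb
  have hAz : A (b (Fin.last (2 * n))) ∈ ℝ ∙ b (Fin.last (2 * n)) := by
    have h := hA (b ⟨0, by omega⟩) (b ⟨1, by omega⟩)
    rw [heis_bracket_zero_one hb hn] at h
    exact h ▸ add_mem (hcent _ _) (hcent _ _)
  have hzlast := mem_eigenspace_last_of_map_mem_span_singleton hA hcent hrad hαmono hαpos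
    hUspan (hUne _) (b.ne_zero _) hAz
  obtain ⟨ω, hω⟩ := exists_eq_smul_of_mem_span_singleton hcent
    (eigenspace_last_le_span_singleton hA hcent hrad hαpos hUspan hzlast he) hene
  have hω_alt : ω.IsAlt := fun x =>
    (smul_eq_zero.1 ((hω x x).symm.trans (heis_isAlt hb x))).resolve_right hene
  obtain ⟨m, v, w, hv, hw, hspan, hfam⟩ := exists_isSymplecticFamily_span_eq hω_alt _
    fun x hx hxi => eq_zero_of_forall_bracket_middle_eigenspace_eq_zero hA hcent hrad hαmono
      hαpos hUspan hzlast hUne i hi x hx fun y hy => by rw [hω, hxi y hy, zero_smul]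
  have hli := hfam.linearIndependent
  obtain ⟨hvw, hvv, hww⟩ := hfam
  refine ⟨m, ?_, v, w, hv, hw, hli, hspan, fun s t => by rw [hω, hvw],
    fun s t => by rw [hω, hvv, zero_smul], fun s t => by rw [hω, hww, zero_smul]⟩
  rw [hU, ← hspan, finrank_span_eq_card hli, Fintype.card_sum, Fintype.card_fin, two_mul]

theorem stmt5
    (n k : ℕ) (hn : 1 ≤ n) (hk : 1 ≤ k)
    (br : HV n →ₗ[ℝ] HV n →ₗ[ℝ] HV n) (hbr : IsHeisenbergBracket n br)
    (A : HV n →ₗ[ℝ] HV n) (hA : IsDerivation br A)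
    (α : Fin (k + 1) → ℝ) (hαmono : StrictMono α) (hαpos : ∀ i, 0 < α i)
    (U : Fin (k + 1) → Submodule ℝ (HV n))
    (hU : ∀ i, U i = Module.End.eigenspace A (α i))
    (hUne : ∀ i, U i ≠ ⊥) (hUspan : (⨆ i, U i) = ⊤)
    (e : HV n) (he : e ∈ U (Fin.last k)) (hene : e ≠ 0) :
    ∀ i : Fin (k + 1), 2 * ((i : ℕ) + 1) = k + 1 →
      ∃ ki : ℕ, Module.finrank ℝ (U i) = 2 * ki ∧
        ∃ v w : Fin ki → HV n,
          (∀ s, v s ∈ U i) ∧ (∀ s, w s ∈ U i) ∧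
          LinearIndependent ℝ (Sum.elim v w) ∧
          Submodule.span ℝ (Set.range (Sum.elim v w)) = U i ∧
          (∀ s t, br (v s) (w t) = (if s = t then (1 : ℝ) else 0) • e) ∧
          (∀ s t, br (v s) (v t) = 0) ∧ (∀ s t, br (w s) (w t) = 0) :=
  stmt5_general n k hn br hbr A hA α hαmono hαpos U hU hUne hUspan e he hene
end
end
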